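/- Let w be an infinite word over a finite alphabet. If w does not have bounded exponent (i.e., for every integer k ≥ 2, w contains a k-power u^k with u nonempty as a factor), then w is not uniformly abelian-square-rich: for every constant C > 0 there exists a factor v of w such that the number of distinct abelian-square factors of v is less than C·|v|². -/
import Mathlib


/-- `u` is a factor of the infinite word `s`. -/
def FactorOf {A : Type*} (u : List A) (s : ℕ → A) : Prop :=
  ∃ i : ℕ, u = (List.range u.length).map fun k => s (i + k)

/-- An abelian square: a nonempty word `x ++ y` with `|x| = |y|` and equal
Parikh vectors. -/
def IsAbelianSquare {A : Type*} [DecidableEq A] (w : List A) : Prop :=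
  w ≠ [] ∧ ∃ x y : List A, w = x ++ y ∧ x.length = y.length ∧
    ∀ c, x.count c = y.count c

private lemma flatten_replicate_length {A : Type*} (k : ℕ) (u : List A) :
    (List.replicate k u).flatten.length = k * u.length := by
  induction k with
  | zero => simp
  | succ k ih => simp [List.replicate_succ, ih, Nat.succ_mul, Nat.add_comm]

private lemma flatten_replicate_getElem {A : Type*} (k : ℕ) (u : List A) (p : ℕ)
    (hp : p < k * u.length) (hm : p % u.length < u.length) :
    (List.replicate k u).flatten[p]'(by rw [flatten_replicate_length]; exact hp) =
      u[p % u.length] := by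
  induction k generalizing p with
  | zero => simp at hp
  | succ k ih =>
    have hlen : (List.replicate k u).flatten.length = k * u.length :=
      flatten_replicate_length k u
    have he : (List.replicate (k + 1) u).flatten = u ++ (List.replicate k u).flatten := by
      rw [List.replicate_succ, List.flatten_cons]
    rw [List.getElem_of_eq he]
    by_cases hc : p < u.length
    · rw [List.getElem_append_left hc]
      congr 1
      exact (Nat.mod_eq_of_lt hc).symm
    · push_neg at hc
      rw [List.getElem_append_right hc]
      have hexp : (k + 1) * u.length = k * u.length + u.length := by ring
      have h1 : p - u.length < k * u.length := by omega
      have h2 : (p - u.length) % u.length = p % u.length := by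
        conv_rhs => rw [← Nat.sub_add_cancel hc]
        rw [Nat.add_mod_right]
      have := ih (p - u.length) h1 (h2 ▸ hm)
      simp only [h2] at this
      convert this using 2

/-- Every factor of `u^k` is determined by (start mod `|u|`, length). -/
private lemma factor_mem_image {A : Type*} (k : ℕ) (u : List A) (hu : u ≠ [])
    (x : List A) (hx : x <:+: (List.replicate k u).flatten) :
    ∃ a : Fin u.length, ∃ L : Fin (k * u.length + 1),
      x = (List.range (L : ℕ)).map fun j =>
        u[((a : ℕ) + j) % u.length]'(Nat.mod_lt _ (List.length_pos_iff.2 hu)) := by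
  obtain ⟨s, t, hst⟩ := hx
  have hm : 0 < u.length := List.length_pos_iff.2 hu
  have hlen : s.length + x.length + t.length = k * u.length := by
    have := congrArg List.length hst
    simp [flatten_replicate_length] at this
    omega
  refine ⟨⟨s.length % u.length, Nat.mod_lt _ hm⟩, ⟨x.length, by omega⟩, ?_⟩
  apply List.ext_getElem (by simp)
  intro j hj hj'
  simp only [List.getElem_map, List.getElem_range]
  have hp : s.length + j < k * u.length := by omega
  have key : (List.replicate k u).flatten[s.length + j]'(by
      rw [flatten_replicate_length]; exact hp) = x[j] := by
    rw [List.getElem_of_eq hst.symm]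
    rw [List.getElem_append_left (by simp; omega)]
    rw [List.getElem_append_right (by simp)]
    congr 1
    simp
  rw [← key, flatten_replicate_getElem k u _ hp (Nat.mod_lt _ hm)]
  congr 1
  exact (Nat.mod_add_mod s.length u.length j).symm

/-- If an infinite word over a finite alphabet contains `k`-powers for every
`k ≥ 2`, then it is not uniformly abelian-square-rich: for every `C > 0` it has
a factor `v` containing fewer than `C·|v|²` distinct abelian-square factors. -/
theorem stmt11 {A : Type*} [Fintype A] [DecidableEq A] (w : ℕ → A)
    (h : ∀ k : ℕ, 2 ≤ k →
      ∃ u : List A, u ≠ [] ∧ FactorOf (List.replicate k u).flatten w) :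
    ∀ C : ℝ, 0 < C → ∃ v : List A, FactorOf v w ∧
      ({x : List A | x <:+: v ∧ IsAbelianSquare x}.ncard : ℝ) <
        C * (v.length : ℝ) ^ 2 := by
  intro C hC
  obtain ⟨k, hk2, hkC⟩ : ∃ k : ℕ, 2 ≤ k ∧ 2 / C < (k : ℕ) := by
    obtain ⟨k, hk⟩ := exists_nat_gt (max 2 (2 / C))
    exact ⟨k, by exact_mod_cast (le_of_lt (lt_of_le_of_lt (le_max_left _ _) hk)),
      lt_of_le_of_lt (le_max_right _ _) hk⟩
  obtain ⟨u, hu, hfac⟩ := h k hk2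
  set v := (List.replicate k u).flatten with hv
  have hm : 0 < u.length := List.length_pos_iff.2 hu
  have hvlen : v.length = k * u.length := flatten_replicate_length k u
  refine ⟨v, hfac, ?_⟩
  -- the factor set injects into Fin |u| × Fin (n+1)
  set g : Fin u.length × Fin (k * u.length + 1) → List A := fun p =>
    (List.range (p.2 : ℕ)).map fun j =>
      u[((p.1 : ℕ) + j) % u.length]'(Nat.mod_lt _ hm) with hg
  have hsub : {x : List A | x <:+: v ∧ IsAbelianSquare x} ⊆ g '' Set.univ := by
    rintro x ⟨hx, -⟩
    obtain ⟨a, L, hxeq⟩ := factor_mem_image k u hu x hx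
    exact ⟨(a, L), trivial, hxeq.symm⟩
  have hfin : (g '' Set.univ).Finite := (Set.finite_univ).image g
  have hcard : {x : List A | x <:+: v ∧ IsAbelianSquare x}.ncard ≤
      u.length * (k * u.length + 1) := by
    calc {x : List A | x <:+: v ∧ IsAbelianSquare x}.ncard
        ≤ (g '' Set.univ).ncard := Set.ncard_le_ncard hsub hfin
      _ ≤ (Set.univ : Set (Fin u.length × Fin (k * u.length + 1))).ncard :=
          Set.ncard_image_le Set.finite_univ
      _ = u.length * (k * u.length + 1) := by
          rw [Set.ncard_univ]; simp [Nat.card_eq_fintype_card]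
  -- numeric estimate
  have hn : (0 : ℝ) < (v.length : ℝ) := by
    rw [hvlen]; positivity
  have hkpos : (0 : ℝ) < (k : ℝ) := by positivity
  have h1v : (1 : ℝ) ≤ (v.length : ℝ) := by
    have : 1 ≤ v.length := by rw [hvlen]; nlinarith
    exact_mod_cast this
  have key : (u.length * (k * u.length + 1) : ℝ) ≤ 2 * (v.length : ℝ) ^ 2 / k := by
    rw [le_div_iff₀ hkpos]
    have h1 : (u.length * (k * u.length + 1) : ℝ) * k =
        (v.length : ℝ) ^ 2 + (v.length : ℝ) := by
      rw [hvlen]; push_cast; ring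
    nlinarith
  have h2k : 2 * (v.length : ℝ) ^ 2 / k < C * (v.length : ℝ) ^ 2 := by
    rw [div_lt_iff₀ hkpos]
    have h2c : 2 < C * k := by
      rw [div_lt_iff₀ hC] at hkC
      linarith
    have hsq : (1 : ℝ) ≤ (v.length : ℝ) ^ 2 := by nlinarith
    nlinarith [h2c, hsq]
  calc ({x : List A | x <:+: v ∧ IsAbelianSquare x}.ncard : ℝ)
      ≤ ((u.length * (k * u.length + 1) : ℕ) : ℝ) := by exact_mod_cast hcard
    _ ≤ 2 * (v.length : ℝ) ^ 2 / k := by push_cast at key ⊢; linarith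
    _ < C * (v.length : ℝ) ^ 2 := h2k
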